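/- Let R be a commutative ring, K and N free R-modules of ranks n and n-1 (n ≥ 2), m ≥ 1, S = S(K*), f : N × K^{m+1} → R multilinear, and define f_0 : N → S by f_0(x) = Σ f(x, a_{i_1},…,a_{i_{m+1}}) a_{i_1}*⋯a_{i_{m+1}}* over a basis {a_i} of K. If f_0 = 0, then with θ the (n-1)×n matrix over S given by θ_{i,j} = g(b_i, a_j) = Σ f(b_i, a_j, a_{i_1},…,a_{i_m}) a_{i_1}*⋯a_{i_m}*, there exists a unique d = d(f,a,b) ∈ S^{m(n-1)-1} such that det(θ(i)) = (-1)^i a_i* d for all 1 ≤ i ≤ n. Moreover d(f,a',b') = [a'/a][b'/b] d(f,a,b) for any other bases a', b'. -/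

import Mathlib

/-!
Since `f₀ = 0`, the vector `X = (a₁*, …, aₙ*)` lies in the kernel of `θ`. For any
`(n-1) × n` matrix `θ`, the vector `c` of signed maximal minors satisfies
`v i * c j = v j * c i` for every kernel vector `v` (apply the adjugate of `θ` bordered by
the unit row `e_j`). With `v = X` this forces `X₀ ∣ c₀`, as `X₀` is prime, and then
`c = -d • X`, which is the existence of `d`. Changing the bases replaces `θ` by `Pᵀ θ Q`
with `P`, `Q` the change-of-basis matrices; left multiplication scales `c` by `det P`, and
`Q *ᵥ c (θ Q) = det Q • c θ` since bordering commutes with right multiplication. As `Q`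
also carries the new dual coordinates back to `X`, `d' = det Q det P d`.
-/

open MvPolynomial

/-- The embedding of `K*` into `S(K*) ≅ R[a_1*,…,a_n*]` (realized as
`MvPolynomial (Fin n) R`) determined by the basis `a`: `a_i* ↦ X i`. -/
noncomputable def dualToPoly {R K : Type*} [CommRing R] [AddCommGroup K] [Module R K]
    {n : ℕ} (a : Module.Basis (Fin n) R K) (φ : Module.Dual R K) : MvPolynomial (Fin n) R :=
  ∑ i : Fin n, MvPolynomial.C (φ (a i)) * MvPolynomial.X i

/-- The matrix `θ` of the Massey determinant construction, in the model of
`S(K*)` tied to the basis `a` of `K`: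
`θ_{p,q} = g(b_p, a'_q) = ∑_{i_1,…,i_m} f(b_p, a'_q, a_{i_1},…,a_{i_m})
a_{i_1}*⋯a_{i_m}*` (using basis independence of `g`, expanded over `a`). -/
noncomputable def masseyTheta {R K L : Type*} [CommRing R]
    [AddCommGroup K] [Module R K] [AddCommGroup L] [Module R L]
    {N M : ℕ} (a : Module.Basis (Fin (N + 2)) R K)
    (aK : Fin (N + 2) → K) (bL : Fin (N + 1) → L)
    (f : L →ₗ[R] MultilinearMap R (fun _ : Fin (M + 1 + 1) => K) R) :
    Matrix (Fin (N + 1)) (Fin (N + 2)) (MvPolynomial (Fin (N + 2)) R) :=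
  Matrix.of fun p q =>
    ∑ idx : Fin (M + 1) → Fin (N + 2),
      MvPolynomial.C (f (bL p) (Fin.cons (aK q) fun j => a (idx j)))
        * ∏ j : Fin (M + 1), MvPolynomial.X (idx j)

open Matrix

namespace Matrix

variable {S : Type*} [CommRing S] {m : ℕ}

def cofactorVec (θ : Matrix (Fin m) (Fin (m + 1)) S) : Fin (m + 1) → S :=
  fun q => (-1) ^ (q : ℕ) * (θ.submatrix id q.succAbove).det

theorem det_of_vecCons (w : Fin (m + 1) → S) (θ : Matrix (Fin m) (Fin (m + 1)) S) :
    (of (vecCons w (of.symm θ))).det = w ⬝ᵥ cofactorVec θ := by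
  rw [det_succ_row_zero, dotProduct]
  refine Finset.sum_congr rfl fun q _ => ?_
  have hminor : (of (vecCons w (of.symm θ))).submatrix Fin.succ q.succAbove =
      θ.submatrix id q.succAbove := rfl
  simp only [cofactorVec, of_apply, cons_val_zero, hminor]
  ring

theorem det_of_vecCons_single (θ : Matrix (Fin m) (Fin (m + 1)) S) (q : Fin (m + 1)) :
    (of (vecCons (Pi.single q 1) (of.symm θ))).det = cofactorVec θ q := by
  rw [det_of_vecCons, single_dotProduct, one_mul]

theorem mul_cofactorVec_eq_of_mulVec_eq_zero {θ : Matrix (Fin m) (Fin (m + 1)) S} {v : Fin (m + 1) → S}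
    (hv : θ *ᵥ v = 0) (i j : Fin (m + 1)) :
    v i * cofactorVec θ j = v j * cofactorVec θ i := by
  set B : Matrix (Fin (m + 1)) (Fin (m + 1)) S := of (vecCons (Pi.single j 1) (of.symm θ))
  have hBv : B *ᵥ v = Pi.single 0 (v j) := by
    ext k
    refine Fin.cases ?_ (fun p => ?_) k
    · simp [B, mulVec, single_dotProduct]
    · simpa [B, mulVec] using congrFun hv p
  have hadj : ∀ q, adjugate B q 0 = cofactorVec θ q := by
    intro q
    rw [adjugate_apply, ← det_of_vecCons_single]
    congr 1
    ext k l
    refine Fin.cases ?_ (fun p => ?_) k <;> simp [B]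
  have hdetB : B.det = cofactorVec θ j := det_of_vecCons_single θ j
  have hadjv := congrFun (congrArg (adjugate B *ᵥ ·) hBv) i
  simp only [mulVec_mulVec, adjugate_mul, smul_mulVec, one_mulVec, mulVec_single] at hadjv
  simpa [hadj, hdetB, mul_comm] using hadjv

theorem cofactorVec_mul_left (P : Matrix (Fin m) (Fin m) S) (θ : Matrix (Fin m) (Fin (m + 1)) S) :
    cofactorVec (P * θ) = P.det • cofactorVec θ := by
  ext q
  have hsub : (P * θ).submatrix id q.succAbove = P * θ.submatrix id q.succAbove := rfl
  simp only [cofactorVec, Pi.smul_apply, smul_eq_mul, hsub, det_mul]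
  ring

theorem mulVec_cofactorVec_mul_right (θ : Matrix (Fin m) (Fin (m + 1)) S)
    (Q : Matrix (Fin (m + 1)) (Fin (m + 1)) S) :
    Q *ᵥ cofactorVec (θ * Q) = Q.det • cofactorVec θ := by
  ext k
  have hrow :
      of (vecCons (Q k) (of.symm (θ * Q))) = of (vecCons (Pi.single k 1) (of.symm θ)) * Q := by
    rw [cons_mul, single_vecMul, one_smul, Equiv.apply_symm_apply]
    rfl
  have := congrArg det hrow
  rw [det_of_vecCons, det_mul, det_of_vecCons_single] at this
  rw [Pi.smul_apply, smul_eq_mul, mul_comm]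
  exact this

theorem cofactorVec_eq_neg_smul_iff {θ : Matrix (Fin m) (Fin (m + 1)) S} {v : Fin (m + 1) → S}
    {d : S} : cofactorVec θ = -(d • v) ↔ ∀ i : Fin (m + 1),
      (θ.submatrix id i.succAbove).det = (-1) ^ ((i : ℕ) + 1) * v i * d := by
  refine funext_iff.trans (forall_congr' fun i => ?_)
  have hsq : ((-1 : S) ^ (i : ℕ)) * (-1) ^ (i : ℕ) = 1 := by rw [← mul_pow]; norm_num
  simp only [cofactorVec, Pi.neg_apply, Pi.smul_apply, smul_eq_mul]
  constructor <;> intro h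
  · linear_combination (-1) ^ (i : ℕ) * h - (θ.submatrix id i.succAbove).det * hsq
  · linear_combination (-1) ^ (i : ℕ) * h - v i * d * hsq

end Matrix

namespace MvPolynomial

variable {R σ : Type*} [CommRing R]

theorem IsHomogeneous.of_X_mul {i : σ} {p : MvPolynomial σ R} {k : ℕ}
    (h : (X i * p).IsHomogeneous (k + 1)) : p.IsHomogeneous k := by
  intro d hd
  have hdeg := h (d := Finsupp.single i 1 + d) (by rwa [coeff_X_mul])
  rw [map_add, Finsupp.weight_single, Pi.one_apply, smul_eq_mul, mul_one] at hdeg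
  omega

theorem isHomogeneous_det {ι : Type*} [Fintype ι] [DecidableEq ι] {k : ℕ}
    {A : Matrix ι ι (MvPolynomial σ R)} (hA : ∀ i j, (A i j).IsHomogeneous k) :
    A.det.IsHomogeneous (Fintype.card ι * k) := by
  rw [Matrix.det_apply]
  refine IsHomogeneous.sum _ _ _ fun τ _ => ?_
  have hprod : (∏ i, A (τ i) i).IsHomogeneous (Fintype.card ι * k) := by
    have := IsHomogeneous.prod Finset.univ _ (fun _ => k) fun i _ => hA (τ i) i
    rwa [Finset.sum_const, smul_eq_mul, Finset.card_univ] at this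
  rcases Int.units_eq_one_or (Equiv.Perm.sign τ) with h | h <;> simp [h, hprod, hprod.neg]

theorem exists_eq_smul_X_of_forall_X_mul_eq [IsDomain R] {c : σ → MvPolynomial σ R}
    (hc : ∀ i j, X i * c j = X j * c i) {i₀ j₀ : σ} (hij : i₀ ≠ j₀) :
    ∃ e : MvPolynomial σ R, c = e • X := by
  have hdvd : X i₀ ∣ X j₀ * c i₀ := ⟨c j₀, (hc i₀ j₀).symm⟩
  obtain ⟨e, he⟩ := (X_prime.dvd_or_dvd hdvd).resolve_left (by simpa [X_dvd_X] using hij)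
  refine ⟨e, ?_⟩
  funext k
  rw [Pi.smul_apply, smul_eq_mul, ← X_mul_cancel_left_iff (i := i₀), hc, he]
  ring

end MvPolynomial

section Massey

variable {R K L : Type*} [CommRing R] [AddCommGroup K] [Module R K] [AddCommGroup L] [Module R L]

theorem apply_cons_eq_sum_repr {ι κ : Type*} [Fintype ι] [Fintype κ] {m : ℕ}
    (f : L →ₗ[R] MultilinearMap R (fun _ : Fin (m + 1) => K) R)
    (b : Module.Basis ι R L) (a : Module.Basis κ R K) (y : L) (z : K) (v : Fin m → K) :
    f y (Fin.cons z v) = ∑ r, ∑ s, b.repr y r * a.repr z s * f (b r) (Fin.cons (a s) v) := by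
  rw [← MultilinearMap.curryLeft_apply]
  conv_lhs => rw [← b.sum_repr y, ← a.sum_repr z]
  simp only [map_sum, map_smul, _root_.sum_apply, _root_.smul_apply,
    MultilinearMap.curryLeft_apply, smul_eq_mul, Finset.mul_sum]
  exact Finset.sum_comm.trans
    (Finset.sum_congr rfl fun r _ => Finset.sum_congr rfl fun s _ => by ring)

variable {N M : ℕ}

noncomputable def masseyF0 (a : Module.Basis (Fin (N + 2)) R K)
    (f : L →ₗ[R] MultilinearMap R (fun _ : Fin (M + 1 + 1) => K) R) (x : L) :
    MvPolynomial (Fin (N + 2)) R :=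
  ∑ idx : Fin (M + 1 + 1) → Fin (N + 2),
    C (f x fun j => a (idx j)) * ∏ j : Fin (M + 1 + 1), X (idx j)

theorem masseyTheta_mulVec_X (a : Module.Basis (Fin (N + 2)) R K) (bL : Fin (N + 1) → L)
    (f : L →ₗ[R] MultilinearMap R (fun _ : Fin (M + 1 + 1) => K) R)
    (hf0 : ∀ x, masseyF0 a f x = 0) :
    masseyTheta a a bL f *ᵥ X = 0 := by
  funext p
  rw [Pi.zero_apply, ← hf0 (bL p), masseyF0, ← (Fin.consEquiv fun _ => Fin (N + 2)).sum_comp,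
    Fintype.sum_prod_type]
  simp only [mulVec, dotProduct, masseyTheta, of_apply, Finset.sum_mul, Fin.consEquiv_apply,
    Fin.prod_univ_succ, Fin.cons_zero, Fin.cons_succ, ← Function.comp_def a, Fin.comp_cons]
  exact Finset.sum_congr rfl fun _ _ => Finset.sum_congr rfl fun _ _ => by ring

theorem masseyTheta_apply_isHomogeneous (a : Module.Basis (Fin (N + 2)) R K)
    (aK : Fin (N + 2) → K) (bL : Fin (N + 1) → L)
    (f : L →ₗ[R] MultilinearMap R (fun _ : Fin (M + 1 + 1) => K) R) (p : Fin (N + 1))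
    (q : Fin (N + 2)) : (masseyTheta a aK bL f p q).IsHomogeneous (M + 1) := by
  refine IsHomogeneous.sum _ _ _ fun idx _ => ?_
  simpa using (isHomogeneous_C _ _).mul
    (IsHomogeneous.prod Finset.univ _ (fun _ => 1) fun j _ => isHomogeneous_X R (idx j))

theorem masseyTheta_eq_mul (a : Module.Basis (Fin (N + 2)) R K)
    (b : Module.Basis (Fin (N + 1)) R L) (aK : Fin (N + 2) → K) (bL : Fin (N + 1) → L)
    (f : L →ₗ[R] MultilinearMap R (fun _ : Fin (M + 1 + 1) => K) R) :
    masseyTheta a aK bL f =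
      ((b.toMatrix bL).map (C (σ := Fin (N + 2))))ᵀ * masseyTheta a a b f *
        (a.toMatrix aK).map (C (σ := Fin (N + 2))) := by
  refine Matrix.ext fun p q => ?_
  simp only [masseyTheta, of_apply, Matrix.mul_apply, Matrix.map_apply, transpose_apply,
    Module.Basis.toMatrix_apply, apply_cons_eq_sum_repr f b a (bL p), map_sum, map_mul,
    Finset.sum_mul, Finset.mul_sum]
  rw [Finset.sum_comm]
  conv_rhs => rw [Finset.sum_comm]
  refine Finset.sum_congr rfl fun r _ => ?_
  rw [Finset.sum_comm]
  exact Finset.sum_congr rfl fun s _ => Finset.sum_congr rfl fun idx _ => by ring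

theorem mulVec_dualToPoly (a a' : Module.Basis (Fin (N + 2)) R K) :
    (a.toMatrix a').map (C (σ := Fin (N + 2))) *ᵥ (fun q => dualToPoly a (a'.dualBasis q)) =
      X := by
  have h : (fun q => dualToPoly a (a'.dualBasis q)) = (a'.toMatrix a).map C *ᵥ X := by
    funext q
    simp [dualToPoly, mulVec, dotProduct, Module.Basis.toMatrix_apply]
  rw [h, Matrix.mulVec_mulVec, ← Matrix.map_mul, Module.Basis.toMatrix_mul_toMatrix_flip,
    Matrix.map_one _ (map_zero _) (map_one _), Matrix.one_mulVec]

theorem exists_cofactorVec_masseyTheta_eq [IsDomain R] (a : Module.Basis (Fin (N + 2)) R K)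
    (bL : Fin (N + 1) → L) (f : L →ₗ[R] MultilinearMap R (fun _ : Fin (M + 1 + 1) => K) R)
    (hf0 : ∀ x, masseyF0 a f x = 0) :
    ∃ d : MvPolynomial (Fin (N + 2)) R, d.IsHomogeneous ((M + 1) * (N + 1) - 1) ∧
      cofactorVec (masseyTheta a a bL f) = -(d • X) := by
  obtain ⟨e, he⟩ := exists_eq_smul_X_of_forall_X_mul_eq
    (mul_cofactorVec_eq_of_mulVec_eq_zero (masseyTheta_mulVec_X a bL f hf0))
    (zero_ne_one : (0 : Fin (N + 2)) ≠ 1)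
  refine ⟨-e, ?_, by rw [he, neg_smul, neg_neg]⟩
  have hminor := isHomogeneous_det (A := (masseyTheta a a bL f).submatrix id (Fin.succAbove 0))
    fun p q => masseyTheta_apply_isHomogeneous a a bL f p _
  have h0 : ((masseyTheta a a bL f).submatrix id (Fin.succAbove 0)).det = X 0 * e := by
    simpa [cofactorVec, mul_comm] using congrFun he 0
  rw [Fintype.card_fin, h0] at hminor
  refine (IsHomogeneous.of_X_mul (i := 0) ?_).neg
  rwa [Nat.sub_add_cancel (Nat.succ_le_of_lt (by positivity)), Nat.mul_comm (M + 1)]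

end Massey

/-- (Massey determinant, `n = N + 2 ≥ 2`, `m = M + 1 ≥ 1`.)
`K, L` free of ranks `n`, `n-1`, `f : L × K^{m+1} → R` multilinear with
`f_0 = 0` (where `f_0(x) = ∑ f(x,a_{i_1},…,a_{i_{m+1}}) a_{i_1}*⋯a_{i_{m+1}}*`).
Then there is a unique `d = d(f,a,b) ∈ S^{m(n-1)-1}` with
`det θ(i) = (-1)^i a_i* d` for all `i` (0-based, whence `(-1)^(i+1)`; here
`a_i* = X i`), and moreover `d(f,a',b') = [a'/a][b'/b] d(f,a,b)` for any other
bases `a', b'`. -/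
theorem massey_det_exists_unique_and_change_of_basis
    {R K L : Type*} [CommRing R] [IsDomain R]
    [AddCommGroup K] [Module R K] [AddCommGroup L] [Module R L]
    {N M : ℕ}
    (a a' : Module.Basis (Fin (N + 2)) R K) (b b' : Module.Basis (Fin (N + 1)) R L)
    (f : L →ₗ[R] MultilinearMap R (fun _ : Fin (M + 1 + 1) => K) R)
    (hf0 : ∀ x : L,
      ∑ idx : Fin (M + 1 + 1) → Fin (N + 2),
        MvPolynomial.C (f x fun j => a (idx j))
          * ∏ j : Fin (M + 1 + 1), MvPolynomial.X (idx j) = 0) :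
    (∃! d : MvPolynomial (Fin (N + 2)) R,
        d.IsHomogeneous ((M + 1) * (N + 1) - 1) ∧
          ∀ i : Fin (N + 2),
            ((masseyTheta a a b f).submatrix id i.succAbove).det
              = (-1) ^ ((i : ℕ) + 1) * MvPolynomial.X i * d) ∧
      ∀ d d' : MvPolynomial (Fin (N + 2)) R,
        (∀ i : Fin (N + 2),
            ((masseyTheta a a b f).submatrix id i.succAbove).det
              = (-1) ^ ((i : ℕ) + 1) * MvPolynomial.X i * d) →
        (∀ i : Fin (N + 2),
            ((masseyTheta a a' b' f).submatrix id i.succAbove).det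
              = (-1) ^ ((i : ℕ) + 1) * dualToPoly a (a'.dualBasis i) * d') →
        d' = MvPolynomial.C (a.toMatrix a').det
              * MvPolynomial.C (b.toMatrix b').det * d := by
  set θ := masseyTheta a a b f
  refine ⟨?_, fun d d' hd hd' => ?_⟩
  · obtain ⟨d, hdeg, hd⟩ := exists_cofactorVec_masseyTheta_eq a b f hf0
    refine ⟨d, ⟨hdeg, cofactorVec_eq_neg_smul_iff.1 hd⟩, fun d₂ ⟨_, hd₂⟩ => ?_⟩
    simpa using congrFun ((cofactorVec_eq_neg_smul_iff.2 hd₂).symm.trans hd) 0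
  · rw [← cofactorVec_eq_neg_smul_iff] at hd hd'
    have key := mulVec_cofactorVec_mul_right (((b.toMatrix b').map (C (σ := Fin (N + 2))))ᵀ * θ)
      ((a.toMatrix a').map C)
    rw [← masseyTheta_eq_mul, hd', cofactorVec_mul_left, hd, mulVec_neg, mulVec_smul,
      mulVec_dualToPoly, det_transpose] at key
    have h0 := congrFun key 0
    simp only [Pi.neg_apply, Pi.smul_apply, smul_eq_mul, ← RingHom.mapMatrix_apply,
      ← RingHom.map_det] at h0
    rw [← X_mul_cancel_right_iff (i := 0)]
    linear_combination -h0
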